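/- Let r ≥ 2 and 1 ≤ k ≤ n_1 ≤ n_2 ≤ ... ≤ n_r be integers, and let n = n_1 + n_2 + ... + n_r. Then Σ_{1 ≤ i < j ≤ r} n_i n_j − n_1 n_2 + (k−1) n_2 = (k−1)(n − n_1) + f_r(n_1−(k−1), n_2, ..., n_r). -/

import Mathlib

open SimpleGraph Finset

/-- `F` has a (not necessarily induced) copy in `G`:  there is an injective map of the
vertices of `F` into the vertices of `G` preserving adjacency. -/
def HasCopy {α β : Type*} (G : SimpleGraph α) (F : SimpleGraph β) : Prop :=
  ∃ f : β → α, Function.Injective f ∧ ∀ ⦃a b⦄, F.Adj a b → G.Adj (f a) (f b)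

/-- `exNum G F` is the maximum number of edges of a spanning subgraph of `G`
containing no copy of `F`. -/
noncomputable def exNum {α β : Type*} [Fintype α] (G : SimpleGraph α) (F : SimpleGraph β) : ℕ :=
  sSup {m | ∃ H : SimpleGraph α, H ≤ G ∧ ¬ HasCopy H F ∧ m = H.edgeSet.ncard}

/-- `kCliques k t` is the disjoint union of `k` copies of the complete graph `K_t`. -/
def kCliques (k t : ℕ) : SimpleGraph (Fin k × Fin t) :=
  SimpleGraph.fromRel (fun p q => p.1 = q.1)

/-- The complete multipartite graph with parts of sizes `n 0, …, n (r-1)`. -/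
abbrev completeMultipartite {r : ℕ} (n : Fin r → ℕ) : SimpleGraph (Σ i : Fin r, Fin (n i)) :=
  completeMultipartiteGraph (fun i => Fin (n i))

/-- The sum of `x` over the part of the (labelled) partition `g` with label `i`. -/
def partSum {r s : ℕ} (x : Fin r → ℕ) (g : Fin r → Fin s) (i : Fin s) : ℕ :=
  ∑ a ∈ Finset.univ.filter (fun a => g a = i), x a

/-- The sum, over unordered pairs of distinct parts of the (labelled) partition `g`,
of the products of the part sums of `x`. -/
def pairProdSum {r s : ℕ} (x : Fin r → ℕ) (g : Fin r → Fin s) : ℕ :=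
  ∑ p ∈ Finset.univ.filter (fun p : Fin s × Fin s => p.1 < p.2),
    partSum x g p.1 * partSum x g p.2

/-- The function `f_t` : the maximum, over all partitions of `{0, …, r-1}` into `t-1`
nonempty parts (encoded as surjections onto `Fin (t-1)`), of the sum over unordered pairs
of distinct parts of the products of the part sums. -/
def fT {r : ℕ} (t : ℕ) (x : Fin r → ℕ) : ℕ :=
  (Finset.univ.filter (fun g : Fin r → Fin (t - 1) => Function.Surjective g)).sup
    (fun g => pairProdSum x g)

/-! The value of a partition of the indices is `Σ_{i<j} x_i x_j` minus the products over pairs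
sharing a block, and a partition of `r` indices into `r - 1` blocks puts some pair into one block.
So `f_r(x)` is that sum minus its smallest term, which for a nondecreasing `x` is `x_1 x_2`,
attained by merging just the first two indices. Lowering `n_1` by `k - 1` lowers
`Σ_{i<j} n_i n_j` by `(k - 1)(n - n_1)`, and the identity is arithmetic from there. -/

theorem sum_filter_comp_lt_eq_sum_filter_lt_ne {ι κ M : Type*} [Fintype ι] [LinearOrder ι]
    [LinearOrder κ] [AddCommMonoid M] (g : ι → κ) (w : ι → ι → M) (hw : ∀ a b, w a b = w b a) :
    ∑ p ∈ univ.filter (fun p : ι × ι => g p.1 < g p.2), w p.1 p.2 =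
      ∑ p ∈ univ.filter (fun p : ι × ι => p.1 < p.2 ∧ g p.1 ≠ g p.2), w p.1 p.2 := by
  apply sum_nbij' (fun p => if p.1 < p.2 then p else p.swap)
    (fun p => if g p.1 < g p.2 then p else p.swap)
  all_goals intro p hp
  all_goals simp only [mem_filter, mem_univ, true_and] at hp ⊢
  all_goals split_ifs <;> grind

theorem sum_pairs_fin_succ {M : Type*} [CommSemiring M] {r : ℕ} (x : Fin (r + 1) → M) :
    ∑ p ∈ univ.filter (fun p : Fin (r + 1) × Fin (r + 1) => p.1 < p.2), x p.1 * x p.2 =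
      x 0 * ∑ i : Fin r, x i.succ +
        ∑ p ∈ univ.filter (fun p : Fin r × Fin r => p.1 < p.2), x p.1.succ * x p.2.succ := by
  simp [sum_filter, Fintype.sum_prod_type, Fin.sum_univ_succ, Fin.succ_pos, mul_sum]

theorem pairProdSum_eq_sum_filter {r s : ℕ} (x : Fin r → ℕ) (g : Fin r → Fin s) :
    pairProdSum x g =
      ∑ p ∈ univ.filter (fun p : Fin r × Fin r => g p.1 < g p.2), x p.1 * x p.2 := by
  have hpart (q : Fin s × Fin s) : partSum x g q.1 * partSum x g q.2 =
      ∑ p ∈ univ.filter (fun p : Fin r × Fin r => (g p.1, g p.2) = q), x p.1 * x p.2 := by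
    rw [partSum, partSum, sum_mul_sum, ← sum_product']
    exact sum_congr (by ext; simp [Prod.ext_iff]) fun _ _ => rfl
  rw [pairProdSum, sum_congr rfl fun q _ => hpart q, sum_fiberwise_eq_sum_filter]
  simp

theorem pairProdSum_add_sum_same_part {r s : ℕ} (x : Fin r → ℕ) (g : Fin r → Fin s) :
    pairProdSum x g + ∑ p ∈ univ.filter (fun p : Fin r × Fin r => p.1 < p.2 ∧ g p.1 = g p.2),
        x p.1 * x p.2 =
      ∑ p ∈ univ.filter (fun p : Fin r × Fin r => p.1 < p.2), x p.1 * x p.2 := by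
  rw [pairProdSum_eq_sum_filter,
    sum_filter_comp_lt_eq_sum_filter_lt_ne g _ fun a b => mul_comm (x a) (x b),
    ← sum_filter_not_add_sum_filter (univ.filter fun p : Fin r × Fin r => p.1 < p.2)
      (fun p => g p.1 = g p.2), filter_filter, filter_filter]

theorem pairProdSum_add_le_of_lt_card {r s : ℕ} (hsr : s < r) (x : Fin r → ℕ)
    (g : Fin r → Fin s) {c : ℕ} (hc : ∀ a b, a < b → c ≤ x a * x b) :
    pairProdSum x g + c ≤
      ∑ p ∈ univ.filter (fun p : Fin r × Fin r => p.1 < p.2), x p.1 * x p.2 := by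
  obtain ⟨a, b, hab, hg⟩ :=
    Fintype.exists_ne_map_eq_of_card_lt g (by rwa [Fintype.card_fin, Fintype.card_fin])
  wlog hlt : a < b generalizing a b
  · exact this b a hab.symm hg.symm (hab.symm.lt_of_le (not_lt.mp hlt))
  rw [← pairProdSum_add_sum_same_part x g]
  gcongr
  exact (hc a b hlt).trans <| single_le_sum (f := fun p : Fin r × Fin r => x p.1 * x p.2)
    (fun _ _ => Nat.zero_le _) (a := (a, b)) (by simp [hlt, hg])

theorem fT_add_mul_eq_sum {r : ℕ} (x : Fin (r + 2) → ℕ)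
    (hmin : ∀ a b, a < b → x 0 * x 1 ≤ x a * x b) :
    fT (r + 2) x + x 0 * x 1 =
      ∑ p ∈ univ.filter (fun p : Fin (r + 2) × Fin (r + 2) => p.1 < p.2), x p.1 * x p.2 := by
  let g₀ : Fin (r + 2) → Fin (r + 1) := fun a => ⟨a - 1, by omega⟩
  have hg₀ : g₀ ∈ univ.filter fun g : Fin (r + 2) → Fin (r + 1) => Function.Surjective g :=
    mem_filter.2 ⟨mem_univ _, fun i => ⟨i.succ, by simp [g₀]⟩⟩
  have hsame : univ.filter (fun p : Fin (r + 2) × Fin (r + 2) => p.1 < p.2 ∧ g₀ p.1 = g₀ p.2)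
      = {(0, 1)} := by
    ext p
    simp only [mem_filter, mem_univ, true_and, mem_singleton, Prod.ext_iff, Fin.ext_iff,
      Fin.lt_def, Fin.val_zero, Fin.val_one, g₀]
    omega
  have hg₀_sum := pairProdSum_add_sum_same_part x g₀
  rw [hsame, sum_singleton] at hg₀_sum
  obtain ⟨g, -, hg⟩ := exists_mem_eq_sup _ ⟨g₀, hg₀⟩ fun g => pairProdSum x g
  apply le_antisymm
  · rw [show fT (r + 2) x = pairProdSum x g from hg]
    exact pairProdSum_add_le_of_lt_card (by omega) x g hmin
  · rw [← hg₀_sum]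
    exact Nat.add_le_add_right (le_sup (f := fun g => pairProdSum x g) hg₀) _

theorem Monotone.update_zero {α : Type*} [Preorder α] {r : ℕ} {n : Fin (r + 2) → α}
    (hn : Monotone n) {m : α} (hm : m ≤ n 0) : Monotone (Function.update n 0 m) := by
  rw [← Fin.cons_self_tail n, Fin.update_cons_zero]
  exact (hn.comp (Fin.strictMono_succ.monotone)).vecCons (hm.trans (hn (Fin.zero_le 1)))

theorem Monotone.mul_zero_one_le {r : ℕ} {x : Fin (r + 2) → ℕ} (hx : Monotone x)
    (a b : Fin (r + 2)) (hab : a < b) : x 0 * x 1 ≤ x a * x b :=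
  Nat.mul_le_mul (hx (Fin.zero_le a)) (hx (Fin.one_le_of_ne_zero (Fin.ne_zero_of_lt hab)))

/-- For `r ≥ 2` and `1 ≤ k ≤ n_1 ≤ ⋯ ≤ n_r`, with `n = Σ n_i`,
`Σ_{i<j} n_i n_j − n_1 n_2 + (k−1) n_2 = (k−1)(n − n_1) + f_r(n_1−(k−1), n_2, …, n_r)`. -/
theorem stmt_2 (r k : ℕ) (hr : 2 ≤ r) (n : Fin r → ℕ) (hmono : Monotone n)
    (hkn : k ≤ n ⟨0, by omega⟩) :
    (∑ p ∈ Finset.univ.filter (fun p : Fin r × Fin r => p.1 < p.2), n p.1 * n p.2)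
        - n ⟨0, by omega⟩ * n ⟨1, by omega⟩ + (k - 1) * n ⟨1, by omega⟩ =
      (k - 1) * ((∑ i, n i) - n ⟨0, by omega⟩) +
        fT r (Function.update n ⟨0, by omega⟩ (n ⟨0, by omega⟩ - (k - 1))) := by
  obtain ⟨r, rfl⟩ := Nat.exists_eq_add_of_le' hr
  simp only [Fin.zero_eta, Fin.mk_one] at hkn ⊢
  obtain ⟨m, hm⟩ : ∃ m, n 0 = m + (k - 1) := ⟨n 0 - (k - 1), by omega⟩
  rw [show n 0 - (k - 1) = m by omega]
  set d := k - 1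
  set x := Function.update n 0 m
  have hx_succ (i : Fin (r + 1)) : x i.succ = n i.succ :=
    Function.update_of_ne (Fin.succ_ne_zero i) _ _
  have hx0 : x 0 = m := Function.update_self _ _ _
  have hfT := fT_add_mul_eq_sum x (hmono.update_zero (by omega)).mul_zero_one_le
  rw [sum_pairs_fin_succ x, hx0, show x 1 = n 1 from hx_succ 0] at hfT
  simp only [hx_succ] at hfT
  have hS : d * n 1 ≤ d * ∑ i : Fin (r + 1), n i.succ := Nat.mul_le_mul_left d <|
    single_le_sum (f := fun i : Fin (r + 1) => n i.succ) (fun _ _ => Nat.zero_le _) (mem_univ 0)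
  rw [sum_pairs_fin_succ n, Fin.sum_univ_succ n, Nat.add_sub_cancel_left, hm]
  simp only [add_mul] at hfT ⊢
  omega
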